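/- arXiv:1908.10627 — 2 statements merged into one kernel-verified Lean document; each statement's English description precedes it below -/
import Mathlib

section
/- Let σ be a primitive m-uniform substitution (m ≥ 2) on a finite alphabet A with an aperiodic fixed point x. Then there exists a constant C = C(σ) such that for every infinite word y in the shift orbit closure X(σ) and all n ∈ ℕ and k ≥ 1, y contains a k-anti-power with block length at most C·k starting at position n. -/
/-- Extension of a substitution (given by its images of letters) to finite words. -/
def substWord {A : Type*} (σ : A → List A) (w : List A) : List A :=
  w.flatMap σ

/-- `substIter σ n a` is the word `σ^n(a)`. -/
def substIter {A : Type*} (σ : A → List A) (n : ℕ) (a : A) : List A :=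
  (substWord σ)^[n] [a]

/-- `σ` is `m`-uniform: every letter has image of length `m`. -/
def IsUniform {A : Type*} (σ : A → List A) (m : ℕ) : Prop :=
  ∀ a, (σ a).length = m

/-- `σ` is primitive: some power `σ^n` maps every letter to a word containing every letter. -/
def IsPrimitive {A : Type*} (σ : A → List A) : Prop :=
  ∃ n, 1 ≤ n ∧ ∀ a b, b ∈ substIter σ n a

/-- Application of an `m`-uniform substitution to an infinite word, letter by letter. -/
def substInf {A : Type*} [Inhabited A] (σ : A → List A) (m : ℕ) (x : ℕ → A) : ℕ → A :=
  fun n => (σ (x (n / m))).getD (n % m) default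

/-- The factor `x[i .. i+len-1]` of an infinite word `x`. -/
def subword {A : Type*} (x : ℕ → A) (i len : ℕ) : List A :=
  (List.range len).map fun j => x (i + j)

/-- `w` is a factor of the infinite word `x`. -/
def FactorOf {A : Type*} (w : List A) (x : ℕ → A) : Prop :=
  ∃ i, subword x i w.length = w

/-- An infinite word is eventually periodic. -/
def EventuallyPeriodic {A : Type*} (x : ℕ → A) : Prop :=
  ∃ p, 1 ≤ p ∧ ∃ N, ∀ n, N ≤ n → x (n + p) = x n

/-- An infinite word is aperiodic if it is not eventually periodic. -/
def IsAperiodic {A : Type*} (x : ℕ → A) : Prop :=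
  ¬ EventuallyPeriodic x

/-- The shift orbit closure of an infinite word, in the product topology on `ℕ → A`. -/
def shiftOrbitClosure {A : Type*} [TopologicalSpace A] (x : ℕ → A) : Set (ℕ → A) :=
  closure {y | ∃ n : ℕ, y = fun k => x (k + n)}

/-- `y` contains a `k`-anti-power with block length `d` starting at position `n`:
the `k` consecutive blocks of length `d` starting at `n` are pairwise distinct. -/
def HasAntipower {A : Type*} (y : ℕ → A) (n k d : ℕ) : Prop :=
  ∀ i < k, ∀ j < k, i ≠ j →
    subword y (n + i * d) d ≠ subword y (n + j * d) d

/-!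
The fixed point `x` is linearly recurrent, so by aperiodicity no long factor of `x` has a small
period. Hence a repetition `x[p, p + D) = x[p + Δ, p + Δ + D)` with `D ≥ B m^J` forces
`m^J ∣ Δ`. Otherwise, at each scale `t ∈ [J, J + P]` the repetition contains an aligned block
`σ^t(V)`, `|V| = K`, whose copy sits at offset `Δ mod m^t` inside some `σ^t(U)`, `|U| = K + 1`.
By pigeonhole two scales `t < t'` share `(V, U)`; applying `σ^(t' - t)` to the scale-`t` picture
puts `σ^t'(V)` at the offsets `(Δ mod m^t) m^(t' - t) ≠ Δ mod m^t'` inside `σ^t'(U)`, which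
yields a long factor with a small period.

Now take a block length `d ≡ 1 (mod m)` with `B m^T ≤ d ≤ C k` and `k ≤ m^T`. Two equal blocks
`i < j` of length `d` in `x` would give `m^T ∣ (j - i) d`, hence `m^T ∣ j - i < k`; words of the
orbit closure inherit this from the factors of `x`.
-/

theorem Nat.exists_le_mul_le_add (q : ℕ) {M : ℕ} (hM : 0 < M) : ∃ c, q ≤ c * M ∧ c * M ≤ q + M := by
  have := Nat.div_add_mod' q M
  have := Nat.mod_lt q hM
  refine ⟨q / M + 1, ?_, ?_⟩ <;> rw [Nat.add_mul, Nat.one_mul] <;> omega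

theorem Nat.exists_le_pow_le_mul {m k : ℕ} (hm : 2 ≤ m) (hk : 1 ≤ k) :
    ∃ T, k ≤ m ^ T ∧ m ^ T ≤ m * k := by
  refine ⟨Nat.clog m k, Nat.le_pow_clog hm k, ?_⟩
  rcases Nat.lt_or_ge 1 k with hk1 | hk1
  · have hpos : 0 < Nat.clog m k := Nat.clog_pos hm hk1
    rw [← Nat.succ_pred_eq_of_pos hpos, pow_succ']
    exact Nat.mul_le_mul_left m (Nat.pow_pred_clog_lt_self hm hk1).le
  · rw [show k = 1 by omega, Nat.clog_one_right, pow_zero]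
    omega

theorem Nat.pow_dvd_of_mod_pow_mul_pow_eq {m Δ t r : ℕ} (hm : 0 < m) (hr : 0 < r)
    (h : Δ % m ^ t * m ^ r = Δ % m ^ (t + r)) : m ^ (t + r) ∣ Δ := by
  set d := Δ % m ^ t with hd_def
  have hd : d * m ^ r ≡ d [MOD m ^ t] := by
    rw [h, Nat.ModEq, Nat.mod_mod_of_dvd Δ (pow_dvd_pow m (Nat.le_add_right t r)), hd_def,
      Nat.mod_mod]
  have hdvd : m ^ t ∣ d * (m ^ r - 1) := by
    rw [Nat.mul_sub_one]
    exact (Nat.modEq_iff_dvd' (Nat.le_mul_of_pos_right d (Nat.pow_pos hm))).mp hd.symm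
  have hcop : Nat.Coprime (m ^ t) (m ^ r - 1) := by
    have hcop_r : Nat.Coprime (m ^ r) (m ^ r - 1) :=
      (Nat.coprime_self_sub_right (Nat.one_le_pow _ _ hm)).mpr (Nat.coprime_one_right _)
    exact Nat.Coprime.pow_left t (hcop_r.coprime_dvd_left (dvd_pow_self m hr.ne'))
  have hd0 : d = 0 :=
    Nat.eq_zero_of_dvd_of_lt (hcop.dvd_of_dvd_mul_right hdvd) (Nat.mod_lt _ (Nat.pow_pos hm))
  exact Nat.dvd_of_mod_eq_zero (by rw [← h, hd0, Nat.zero_mul])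

theorem List.length_flatMap_of_forall_length_eq {α β : Type*} {f : α → List β} {B : ℕ}
    (hf : ∀ a, (f a).length = B) (l : List α) : (l.flatMap f).length = l.length * B := by
  simp [List.length_flatMap, hf]

theorem List.drop_mul_flatMap_of_forall_length_eq {α β : Type*} {f : α → List β} {B : ℕ}
    (hf : ∀ a, (f a).length = B) : ∀ (l : List α) (n : ℕ),
    (l.flatMap f).drop (n * B) = (l.drop n).flatMap f
  | [], n => by simp
  | a :: l, 0 => by simp
  | a :: l, n + 1 => by
      have hlen : (n + 1) * B = (f a).length + n * B := by rw [hf a]; ring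
      rw [List.drop_succ_cons, List.flatMap_cons, hlen, List.drop_length_add_append,
        List.drop_mul_flatMap_of_forall_length_eq hf l n]

theorem List.IsPrefix.flatMap_drop_mul {α β : Type*} {f : α → List β} {B : ℕ}
    (hf : ∀ a, (f a).length = B) {u l : List α} {n : ℕ} (h : u <+: l.drop n) :
    u.flatMap f <+: (l.flatMap f).drop (n * B) :=
  List.drop_mul_flatMap_of_forall_length_eq hf l n ▸ h.flatMap f

section

variable {A : Type*}

section Substitution

variable (σ : A → List A)

theorem iterate_substWord : ∀ (r : ℕ) (l : List A),
    (substWord σ)^[r] l = l.flatMap (substIter σ r)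
  | 0, l => (List.flatMap_singleton' l).symm
  | r + 1, l => by
      rw [Function.iterate_succ_apply, iterate_substWord r, substWord, List.flatMap_assoc]
      congr 1
      funext a
      rw [substIter, Function.iterate_succ_apply, iterate_substWord r, substWord,
        List.flatMap_singleton]

theorem substIter_one (a : A) : substIter σ 1 a = σ a := by
  simp [substIter, substWord]

theorem substIter_add (t r : ℕ) (a : A) :
    substIter σ (t + r) a = (substIter σ t a).flatMap (substIter σ r) := by
  rw [substIter, Nat.add_comm, Function.iterate_add_apply, iterate_substWord]
  rfl

theorem flatMap_substIter_flatMap_substIter (t r : ℕ) (l : List A) :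
    (l.flatMap (substIter σ t)).flatMap (substIter σ r) = l.flatMap (substIter σ (t + r)) := by
  simp only [List.flatMap_assoc, ← substIter_add]

end Substitution

theorem length_substIter {σ : A → List A} {m : ℕ} (hunif : IsUniform σ m) (t : ℕ) (a : A) :
    (substIter σ t a).length = m ^ t := by
  induction t generalizing a with
  | zero => rfl
  | succ t ih =>
      rw [Nat.add_comm, substIter_add, List.length_flatMap_of_forall_length_eq ih, substIter_one,
        hunif a, Nat.add_comm, pow_succ']

section Subword

variable (x : ℕ → A)

@[simp] theorem length_subword (i L : ℕ) : (subword x i L).length = L := by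
  simp [subword]

@[simp] theorem getElem_subword (i L w : ℕ) (h : w < (subword x i L).length) :
    (subword x i L)[w] = x (i + w) := by
  simp [subword]

theorem subword_eq_subword_iff {y : ℕ → A} {i j L : ℕ} :
    subword x i L = subword y j L ↔ ∀ w < L, x (i + w) = y (j + w) := by
  simp [List.ext_getElem_iff]

theorem subword_one (i : ℕ) : subword x i 1 = [x i] := by
  simp [subword]

theorem subword_add (i L₁ L₂ : ℕ) :
    subword x i (L₁ + L₂) = subword x i L₁ ++ subword x (i + L₁) L₂ := by
  simp [subword, List.range_add, Nat.add_assoc]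

theorem take_subword {i ℓ L : ℕ} (h : ℓ ≤ L) : (subword x i L).take ℓ = subword x i ℓ := by
  rw [← Nat.add_sub_cancel' h, subword_add, List.take_left' (length_subword _ _ _)]

theorem drop_subword (i o L : ℕ) : (subword x i L).drop o = subword x (i + o) (L - o) := by
  rcases Nat.le_total o L with h | h
  · rw [← Nat.add_sub_cancel' h, subword_add, List.drop_left' (length_subword _ _ _),
      Nat.add_sub_cancel_left]
  · rw [List.drop_eq_nil_of_le (by simpa using h), Nat.sub_eq_zero_of_le h]
    simp [subword]

theorem subword_prefix_subword {i ℓ L : ℕ} (h : ℓ ≤ L) : subword x i ℓ <+: subword x i L :=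
  take_subword x h ▸ List.take_prefix _ _

theorem eq_subword_of_prefix {u : List A} {i L : ℕ} (h : u <+: subword x i L) :
    u = subword x i u.length := by
  rw [List.prefix_iff_eq_take.mp h, take_subword x (by simpa using h.length_le)]
  simp

theorem subword_infix_subword {i o ℓ L : ℕ} (h₁ : i ≤ o) (h₂ : o + ℓ ≤ i + L) :
    subword x o ℓ <:+: subword x i L := by
  refine ⟨subword x i (o - i), subword x (o + ℓ) (L - (o - i) - ℓ), ?_⟩
  conv_rhs => rw [show L = o - i + ℓ + (L - (o - i) - ℓ) by omega, subword_add, subword_add,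
    Nat.add_sub_cancel' h₁, ← Nat.add_assoc, Nat.add_sub_cancel' h₁]

theorem exists_eq_subword_of_infix {u : List A} {i L : ℕ} (h : u <:+: subword x i L) :
    ∃ o, i ≤ o ∧ o + u.length ≤ i + L ∧ u = subword x o u.length := by
  obtain ⟨s, t, hst⟩ := h
  have hpre : u <+: (subword x i L).drop s.length := ⟨t, by simp [← hst]⟩
  rw [drop_subword] at hpre
  have hlen := congrArg List.length hst
  simp only [List.length_append, length_subword] at hlen
  exact ⟨i + s.length, by omega, by omega, eq_subword_of_prefix x hpre⟩

theorem subword_add_eq_subword_add {y : ℕ → A} {p q D s L : ℕ}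
    (h : subword x p D = subword y q D) (hs : s + L ≤ D) :
    subword x (p + s) L = subword y (q + s) L := by
  rw [subword_eq_subword_iff] at h ⊢
  intro w hw
  simpa only [Nat.add_assoc] using h (s + w) (by omega)

end Subword

section FixedPoint

variable [Inhabited A] {σ : A → List A} {m : ℕ} {x : ℕ → A}

theorem subst_eq_subword (hm : 0 < m) (hunif : IsUniform σ m)
    (hfix : substInf σ m x = x) (c : ℕ) : σ (x c) = subword x (c * m) m := by
  apply List.ext_getElem (by simp [hunif (x c)])
  intro w hw _
  have hw' : w < m := hunif (x c) ▸ hw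
  have hdiv : (c * m + w) / m = c := by
    rw [Nat.add_comm, Nat.add_mul_div_right _ _ hm, Nat.div_eq_of_lt hw', Nat.zero_add]
  have hmod : (c * m + w) % m = w := by
    rw [Nat.add_comm, Nat.add_mul_mod_self_right, Nat.mod_eq_of_lt hw']
  conv_rhs => rw [getElem_subword, ← hfix]
  simp [substInf, hdiv, hmod, hw]

theorem flatMap_subword_eq_subword (hm : 0 < m) (hunif : IsUniform σ m)
    (hfix : substInf σ m x = x) (c L : ℕ) :
    (subword x c L).flatMap σ = subword x (c * m) (L * m) := by
  induction L generalizing c with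
  | zero => simp [subword]
  | succ L ih =>
      rw [Nat.add_comm L, subword_add, subword_one, List.singleton_append, List.flatMap_cons, ih,
        subst_eq_subword hm hunif hfix, Nat.add_mul c, one_mul, ← subword_add]
      congr 1
      ring

theorem flatMap_substIter_subword (hm : 0 < m) (hunif : IsUniform σ m)
    (hfix : substInf σ m x = x) (t c L : ℕ) :
    (subword x c L).flatMap (substIter σ t) = subword x (c * m ^ t) (L * m ^ t) := by
  induction t generalizing c L with
  | zero =>
      simp only [pow_zero, Nat.mul_one]
      exact List.flatMap_singleton' _
  | succ t ih =>
      rw [Nat.add_comm, ← flatMap_substIter_flatMap_substIter, funext (substIter_one σ),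
        flatMap_subword_eq_subword hm hunif hfix, ih]
      congr 1 <;> ring

theorem substIter_eq_subword (hm : 0 < m) (hunif : IsUniform σ m)
    (hfix : substInf σ m x = x) (t c : ℕ) :
    substIter σ t (x c) = subword x (c * m ^ t) (m ^ t) := by
  simpa [subword_one] using flatMap_substIter_subword hm hunif hfix t c 1

end FixedPoint

def IsLinearlyRecurrent (x : ℕ → A) (K : ℕ) : Prop :=
  ∀ L i q, ∃ o, q ≤ o ∧ o + L ≤ q + K * L ∧ subword x o L = subword x i L

theorem exists_forall_exists_le_subword_eq [Finite A] (x : ℕ → A) (L : ℕ) :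
    ∃ N, ∀ i, ∃ o ≤ N, subword x o L = subword x i L := by
  obtain ⟨N, hN⟩ :=
    ((List.finite_length_eq A L).image fun w => sInf {o | subword x o L = w}).bddAbove
  exact ⟨N, fun i => ⟨_, hN ⟨_, length_subword x i L, rfl⟩,
    Nat.sInf_mem (s := {o | subword x o L = subword x i L}) ⟨i, rfl⟩⟩⟩

theorem exists_isLinearlyRecurrent [Finite A] [Inhabited A] {σ : A → List A} {m : ℕ} {x : ℕ → A}
    (hm : 2 ≤ m) (hunif : IsUniform σ m) (hprim : IsPrimitive σ) (hfix : substInf σ m x = x) :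
    ∃ K, IsLinearlyRecurrent x K := by
  have hm0 : 0 < m := by omega
  obtain ⟨P, -, hP⟩ := hprim
  obtain ⟨N, hN⟩ := exists_forall_exists_le_subword_eq x 2
  obtain ⟨s, hNs, -⟩ := Nat.exists_le_pow_le_mul hm (k := N + 2) (by omega)
  refine ⟨2 * m ^ (P + s + 1), fun L i q => ?_⟩
  rcases Nat.eq_zero_or_pos L with rfl | hL
  · exact ⟨q, le_rfl, by simp, by simp [subword]⟩
  obtain ⟨t, hLt, htL⟩ := Nat.exists_le_pow_le_mul hm hL
  obtain ⟨c, hqc, hcq⟩ := Nat.exists_le_mul_le_add q (Nat.pow_pos (n := P + s + t) hm0)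
  obtain ⟨o, hoN, ho⟩ := hN (i / m ^ t)
  have hi := Nat.div_add_mod' i (m ^ t)
  have hit := Nat.mod_lt i (Nat.pow_pos (n := t) hm0)
  -- `x[i, i + L)` lies in `σ^t` of the two-letter factor at `i / m^t`, which already occurs in
  -- `σ^s (x 0)`; primitivity puts `x 0` into every `σ^P (x c)`.
  have hwindow : subword x i L <:+: subword x (c * m ^ (P + s + t)) (m ^ (P + s + t)) :=
    calc subword x i L <:+: subword x (i / m ^ t * m ^ t) (2 * m ^ t) :=
          subword_infix_subword x (Nat.div_mul_le_self i _) (by omega)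
      _ = (subword x o 2).flatMap (substIter σ t) := by
          rw [ho, flatMap_substIter_subword hm0 hunif hfix]
      _ <:+: (subword x 0 (m ^ s)).flatMap (substIter σ t) :=
          (subword_infix_subword x (Nat.zero_le o) (by omega)).flatMap _
      _ = substIter σ (s + t) (x 0) := by
          rw [substIter_add, substIter_eq_subword hm0 hunif hfix, Nat.zero_mul]
      _ <:+: (substIter σ P (x c)).flatMap (substIter σ (s + t)) :=
          List.infix_flatMap_of_mem (hP _ _) _
      _ = subword x (c * m ^ (P + s + t)) (m ^ (P + s + t)) := by
          rw [← substIter_add, ← Nat.add_assoc, substIter_eq_subword hm0 hunif hfix]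
  obtain ⟨o', hco', ho'c, ho'⟩ := exists_eq_subword_of_infix x hwindow
  have hpow : m ^ (P + s + t) ≤ m ^ (P + s + 1) * L := by
    rw [pow_add, pow_succ, Nat.mul_assoc]
    exact Nat.mul_le_mul_left _ htL
  refine ⟨o', by omega, ?_, ?_⟩
  · simp only [length_subword] at ho'c
    rw [Nat.mul_assoc]
    omega
  · simpa using ho'.symm

theorem IsLinearlyRecurrent.periodic_of_subword_eq {x : ℕ → A} {K a b L : ℕ}
    (hK : IsLinearlyRecurrent x K) (hab : a < b) (hL : K * (b - a + 1) ≤ L)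
    (h : subword x a L = subword x b L) : Function.Periodic x (b - a) := by
  intro n
  obtain ⟨o, hao, hoK, ho⟩ := hK (b - a + 1) n a
  rw [subword_eq_subword_iff] at h ho
  have hstart := ho 0 (by omega)
  have hend := ho (b - a) (by omega)
  have hrep := h (o - a) (by omega)
  rw [show a + (o - a) = o by omega, show b + (o - a) = o + (b - a) by omega] at hrep
  rw [← hend, ← hrep]
  simpa using hstart

theorem IsLinearlyRecurrent.eq_of_prefix_drop {x : ℕ → A} {K s L M o₁ o₂ : ℕ} {W : List A}
    (hK : IsLinearlyRecurrent x K) (haper : IsAperiodic x)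
    (h₁ : W <+: (subword x s L).drop o₁) (h₂ : W <+: (subword x s L).drop o₂)
    (hW : K * M ≤ W.length) (ho₁ : o₁ < M) (ho₂ : o₂ < M) : o₁ = o₂ := by
  rw [drop_subword] at h₁ h₂
  by_contra hne
  wlog hlt : o₁ < o₂ generalizing o₁ o₂
  · exact this h₂ h₁ ho₂ ho₁ (Ne.symm hne) (by omega)
  have hper := hK.periodic_of_subword_eq (L := W.length) (Nat.add_lt_add_left hlt s)
    (le_trans (Nat.mul_le_mul_left K (by omega)) hW)
    ((eq_subword_of_prefix x h₁).symm.trans (eq_subword_of_prefix x h₂))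
  exact haper ⟨_, by omega, 0, fun n _ => hper n⟩

section Recognizability

variable [Inhabited A] {σ : A → List A} {m : ℕ} {x : ℕ → A}

theorem exists_flatMap_substIter_prefix_drop (hm : 0 < m) (hunif : IsUniform σ m)
    (hfix : substInf σ m x = x) {p Δ D L t : ℕ} (hrep : subword x p D = subword x (p + Δ) D)
    (hD : (L + 1) * m ^ t ≤ D) :
    ∃ a c, (subword x a L).flatMap (substIter σ t) <+:
      ((subword x c (L + 1)).flatMap (substIter σ t)).drop (Δ % m ^ t) := by
  have hM : 0 < m ^ t := Nat.pow_pos hm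
  obtain ⟨a, hpa, hap⟩ := Nat.exists_le_mul_le_add p hM
  refine ⟨a, a + Δ / m ^ t, ?_⟩
  have hΔ := Nat.div_add_mod' Δ (m ^ t)
  have hΔt := Nat.mod_lt Δ hM
  rw [Nat.add_mul, Nat.one_mul] at hD
  have hshift := subword_add_eq_subword_add x hrep (s := a * m ^ t - p) (L := L * m ^ t) (by omega)
  rw [show p + (a * m ^ t - p) = a * m ^ t by omega,
    show p + Δ + (a * m ^ t - p) = (a + Δ / m ^ t) * m ^ t + Δ % m ^ t by rw [Nat.add_mul]; omega]
    at hshift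
  rw [flatMap_substIter_subword hm hunif hfix, flatMap_substIter_subword hm hunif hfix,
    drop_subword, hshift]
  exact subword_prefix_subword x (by rw [Nat.add_mul, Nat.one_mul]; omega)

theorem mul_pow_eq_of_flatMap_substIter_prefix_drop (hm : 0 < m) (hunif : IsUniform σ m)
    (hfix : substInf σ m x = x) {K : ℕ} (hK : IsLinearlyRecurrent x K) (haper : IsAperiodic x)
    {V : List A} {c L t r o o' : ℕ} (hV : K ≤ V.length)
    (h : V.flatMap (substIter σ t) <+: ((subword x c L).flatMap (substIter σ t)).drop o)
    (h' : V.flatMap (substIter σ (t + r)) <+: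
      ((subword x c L).flatMap (substIter σ (t + r))).drop o')
    (ho : o < m ^ t) (ho' : o' < m ^ (t + r)) : o * m ^ r = o' := by
  have hlift := h.flatMap_drop_mul (length_substIter hunif r)
  rw [flatMap_substIter_flatMap_substIter, flatMap_substIter_flatMap_substIter] at hlift
  rw [flatMap_substIter_subword hm hunif hfix] at hlift h'
  refine hK.eq_of_prefix_drop haper hlift h' ?_ ?_ ho'
  · rw [List.length_flatMap_of_forall_length_eq (length_substIter hunif _)]
    exact Nat.mul_le_mul_right _ hV
  · rw [pow_add]
    exact Nat.mul_lt_mul_of_pos_right ho (Nat.pow_pos hm)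

end Recognizability

theorem exists_pow_dvd_of_subword_eq [Finite A] [Inhabited A] {σ : A → List A} {m : ℕ}
    {x : ℕ → A} (hm : 2 ≤ m) (hunif : IsUniform σ m) (hprim : IsPrimitive σ)
    (hfix : substInf σ m x = x) (haper : IsAperiodic x) :
    ∃ B, ∀ J p Δ D, B * m ^ J ≤ D → subword x p D = subword x (p + Δ) D → m ^ J ∣ Δ := by
  have hm0 : 0 < m := by omega
  obtain ⟨K, hK⟩ := exists_isLinearlyRecurrent hm hunif hprim hfix
  have := Fintype.ofFinite A
  set P := Fintype.card (List.Vector A K × List.Vector A (K + 1))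
  refine ⟨(K + 1) * m ^ P, fun J p Δ D hD hrep => ?_⟩
  by_contra hΔ
  have hdesub : ∀ i : Fin (P + 1), ∃ a c,
      (subword x a K).flatMap (substIter σ (J + i)) <+:
        ((subword x c (K + 1)).flatMap (substIter σ (J + i))).drop (Δ % m ^ (J + i)) := by
    refine fun i => exists_flatMap_substIter_prefix_drop hm0 hunif hfix hrep (le_trans ?_ hD)
    calc (K + 1) * m ^ (J + i) ≤ (K + 1) * m ^ (P + J) :=
          Nat.mul_le_mul_left _ (Nat.pow_le_pow_right hm0 (by omega))
      _ = (K + 1) * m ^ P * m ^ J := by rw [pow_add, Nat.mul_assoc]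
  choose a c hac using hdesub
  obtain ⟨i, i', hne, heq⟩ := Fintype.exists_ne_map_eq_of_card_lt
    (fun i => ((⟨subword x (a i) K, length_subword ..⟩,
      ⟨subword x (c i) (K + 1), length_subword ..⟩) : List.Vector A K × List.Vector A (K + 1)))
    (by simp [P])
  wlog hlt : i < i' generalizing i i'
  · exact this i' i hne.symm heq.symm (lt_of_le_of_ne (not_lt.mp hlt) hne.symm)
  obtain ⟨hV, hU⟩ := Prod.mk.inj heq
  have h₁ := hac i
  rw [show subword x (a i) K = subword x (a i') K from congrArg Subtype.val hV,
    show subword x (c i) (K + 1) = subword x (c i') (K + 1) from congrArg Subtype.val hU] at h₁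
  have h₂ := hac i'
  rw [show J + (i' : ℕ) = J + i + (i' - i) by omega] at h₂
  have hoffset := mul_pow_eq_of_flatMap_substIter_prefix_drop hm0 hunif hfix hK haper
    (length_subword ..).ge h₁ h₂ (Nat.mod_lt _ (Nat.pow_pos hm0)) (Nat.mod_lt _ (Nat.pow_pos hm0))
  exact hΔ (dvd_trans (pow_dvd_pow m (by omega))
    (Nat.pow_dvd_of_mod_pow_mul_pow_eq hm0 (by omega) hoffset))

theorem hasAntipower_of_pow_dvd {x : ℕ → A} {m T k d : ℕ}
    (hrec : ∀ p Δ, subword x p d = subword x (p + Δ) d → m ^ T ∣ Δ) (hd : Nat.Coprime m d)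
    (hk : k ≤ m ^ T) (p : ℕ) : HasAntipower x p k d := by
  intro i hi j hj hij heq
  wlog hlt : i < j generalizing i j
  · exact this j hj i hi hij.symm heq.symm (by omega)
  obtain ⟨e, rfl⟩ := Nat.exists_eq_add_of_lt hlt
  have hdvd : m ^ T ∣ (e + 1) * d := hrec (p + i * d) _ (by rw [heq]; congr 1; ring)
  have hle := Nat.le_of_dvd e.succ_pos ((Nat.Coprime.pow_left T hd).dvd_of_dvd_mul_right hdvd)
  omega

theorem HasAntipower.of_forall_eq_add {x y : ℕ → A} {n k d r : ℕ}
    (hxy : ∀ w < n + k * d, y w = x (w + r)) (h : HasAntipower x (n + r) k d) :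
    HasAntipower y n k d := by
  have hblock : ∀ i < k, subword y (n + i * d) d = subword x (n + r + i * d) d := by
    intro i hi
    rw [subword_eq_subword_iff]
    intro w hw
    have : (i + 1) * d ≤ k * d := Nat.mul_le_mul_right d hi
    rw [hxy _ (by rw [Nat.add_mul, Nat.one_mul] at this; omega)]
    congr 1
    ring
  intro i hi j hj hij
  rw [hblock i hi, hblock j hj]
  exact h i hi j hj hij

theorem exists_forall_eq_add_of_mem_shiftOrbitClosure [TopologicalSpace A] [DiscreteTopology A]
    {x y : ℕ → A} (hy : y ∈ shiftOrbitClosure x) (N : ℕ) : ∃ r, ∀ w < N, y w = x (w + r) := by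
  have hopen : IsOpen ((Finset.range N : Set ℕ).pi fun w => {y w}) :=
    isOpen_set_pi (Finset.finite_toSet _) fun _ _ => isOpen_discrete _
  obtain ⟨_, hz, r, rfl⟩ := mem_closure_iff.mp hy _ hopen (by simp)
  exact ⟨r, fun w hw => (hz w (by simpa using hw)).symm⟩

end

/-- Theorem 2 / main theorem: if `σ` is a primitive `m`-uniform substitution
(`m ≥ 2`) on a finite alphabet with an aperiodic fixed point `x`, then there is a constant `C`
such that every `y` in the shift orbit closure `X(σ)` contains, for all `n` and `k ≥ 1`,
a `k`-anti-power with block length at most `C * k` starting at position `n`. -/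
theorem antipowers_of_primitive_uniform
    {A : Type*} [Fintype A] [Inhabited A] [TopologicalSpace A] [DiscreteTopology A]
    (σ : A → List A) (m : ℕ) (hm : 2 ≤ m)
    (hunif : IsUniform σ m) (hprim : IsPrimitive σ)
    (x : ℕ → A) (hfix : substInf σ m x = x) (haper : IsAperiodic x) :
    ∃ C : ℕ, ∀ y ∈ shiftOrbitClosure x, ∀ n k : ℕ, 1 ≤ k →
      ∃ d : ℕ, 1 ≤ d ∧ d ≤ C * k ∧ HasAntipower y n k d := by
  obtain ⟨B, hB⟩ := exists_pow_dvd_of_subword_eq hm hunif hprim hfix haper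
  refine ⟨B * m * m + 1, fun y hy n k hk => ?_⟩
  obtain ⟨T, hkT, hTk⟩ := Nat.exists_le_pow_le_mul hm hk
  set d := B * m ^ T * m + 1
  have hcop : Nat.Coprime m d :=
    (Nat.coprime_mul_right_add_right m 1 _).mpr (Nat.coprime_one_right m)
  have hBd : B * m ^ T ≤ d := Nat.le_succ_of_le (Nat.le_mul_of_pos_right _ (by omega))
  obtain ⟨r, hr⟩ := exists_forall_eq_add_of_mem_shiftOrbitClosure hy (n + k * d)
  refine ⟨d, by omega, ?_, HasAntipower.of_forall_eq_add hr
    (hasAntipower_of_pow_dvd (fun p Δ => hB T p Δ d hBd) hcop hkT _)⟩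
  calc d = B * m ^ T * m + 1 := rfl
    _ ≤ B * (m * k) * m + k := by gcongr
    _ = (B * m * m + 1) * k := by ring
end

section
/- Let σ be the 3-uniform morphism on {0, 1} with σ(0) = 010 and σ(1) = 111, and let c = σ^∞(0) be its fixed point starting with 0 (the Cantor word). Then there is no constant C such that for all n ∈ ℕ and k ≥ 1, c contains a k-anti-power with block length at most C·k starting at position n; that is, the conclusion of the main anti-power theorem fails for this non-primitive substitution. -/
/-- The Cantor substitution `0 ↦ 010`, `1 ↦ 111`. -/
def cantorSubst : Fin 2 → List (Fin 2) :=
  ![[0, 1, 0], [1, 1, 1]]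

section Substitution

variable {A : Type*} [Inhabited A] {σ : A → List A} {m : ℕ} {x : ℕ → A} {a : A}

theorem substInf_fixed_apply_of_eq_replicate (hm : 0 < m) (hσ : σ a = List.replicate m a)
    (hx : substInf σ m x = x) {n : ℕ} (hn : x (n / m) = a) : x n = a := by
  rw [← hx, substInf, hn, hσ, List.getD_eq_getElem _ _ (by simpa using Nat.mod_lt n hm)]
  exact List.getElem_replicate ..

theorem substInf_fixed_run_pow (hm : 0 < m) (hσ : σ a = List.replicate m a)
    (hx : substInf σ m x = x) {p q : ℕ} (hrun : ∀ i ∈ Set.Ico p q, x i = a) (k : ℕ) :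
    ∀ i ∈ Set.Ico (m ^ k * p) (m ^ k * q), x i = a := by
  induction k with
  | zero => simpa using hrun
  | succ k ih =>
    rintro i ⟨hpi, hiq⟩
    refine substInf_fixed_apply_of_eq_replicate hm hσ hx (ih _ ⟨?_, ?_⟩)
    · rwa [Nat.le_div_iff_mul_le hm, mul_right_comm, ← pow_succ]
    · rwa [Nat.div_lt_iff_lt_mul hm, mul_right_comm, ← pow_succ]

end Substitution

theorem subword_eq_replicate {A : Type*} {y : ℕ → A} {i d : ℕ} {a : A}
    (h : ∀ j ∈ Set.Ico i (i + d), y j = a) : subword y i d = List.replicate d a := by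
  refine List.ext_getElem (by simp [subword]) fun j hj _ => ?_
  simp only [subword, List.getElem_map, List.getElem_range, List.getElem_replicate]
  exact h _ ⟨by omega, by simp_all [subword]⟩

theorem not_hasAntipower_of_forall_eq {A : Type*} {y : ℕ → A} {n k d : ℕ} {a : A} (hk : 2 ≤ k)
    (h : ∀ i ∈ Set.Ico n (n + k * d), y i = a) : ¬ HasAntipower y n k d := by
  have hblock : ∀ b < k, subword y (n + b * d) d = List.replicate d a := fun b hb =>
    subword_eq_replicate fun j ⟨hj₁, hj₂⟩ => h j ⟨by nlinarith, by nlinarith⟩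
  intro hanti
  exact hanti 0 (by omega) 1 (by omega) zero_ne_one
    ((hblock 0 (by omega)).trans (hblock 1 (by omega)).symm)

theorem cantor_eq_one_of_mem_Ico (c : ℕ → Fin 2) (hfix : substInf cantorSubst 3 c = c)
    (h0 : c 0 = 0) (k : ℕ) : ∀ i ∈ Set.Ico (3 ^ k) (2 * 3 ^ k), c i = 1 := by
  have h1 : c 1 = 1 := by
    rw [← hfix, substInf]
    simp [h0, cantorSubst]
  have hrun : ∀ i ∈ Set.Ico 1 2, c i = 1 := fun i ⟨hi₁, hi₂⟩ => by
    rwa [show i = 1 by omega]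
  simpa [mul_comm] using
    substInf_fixed_run_pow (by norm_num) (by rfl) hfix hrun k

/-- second example in the Conclusion: for the Cantor word `c = σ^∞(0)`, the
fixed point starting with `0` of the non-primitive `3`-uniform morphism `0 ↦ 010`, `1 ↦ 111`,
the conclusion of the main theorem fails: there is no constant `C` such that for all `n` and
`k ≥ 1`, `c` contains a `k`-anti-power with block length at most `C * k` starting at
position `n`. -/
theorem cantor_no_linear_antipowers
    (c : ℕ → Fin 2) (hfix : substInf cantorSubst 3 c = c) (h0 : c 0 = 0) :
    ¬ ∃ C : ℕ, ∀ n k : ℕ, 1 ≤ k →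
      ∃ d : ℕ, 1 ≤ d ∧ d ≤ C * k ∧ HasAntipower c n k d := by
  rintro ⟨C, hC⟩
  obtain ⟨d, -, hdC, hanti⟩ := hC (3 ^ (4 * C)) 2 (by norm_num)
  have hd : 2 * d < 3 ^ (4 * C) := by
    linarith [Nat.lt_pow_self (n := 4 * C) (by norm_num : 1 < 3)]
  refine not_hasAntipower_of_forall_eq (a := 1) le_rfl (fun i ⟨hi₁, hi₂⟩ => ?_) hanti
  exact cantor_eq_one_of_mem_Ico c hfix h0 (4 * C) i ⟨hi₁, by omega⟩
end
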